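/- arXiv:1408.5809 — 10 statements merged into one kernel-verified Lean document; each statement's English description precedes it below -/
import Mathlib

section
/- Every natural transformation τ between container interpretations ⟦C⟧ and ⟦C'⟧ equals the interpretation of its quote: ⟦⌜τ⌝⟧ = τ. Hence the interpretation functor of containers is full. -/
/-- Interpretation of a container `S ◁ P`: `⟦S ◁ P⟧ X = Σ s : S, P s → X`. -/
def Cont.Ext {S : Type} (P : S → Type) (X : Type) : Type := Σ s : S, P s → X

/-- Interpretation of a container on functions. -/
def Cont.map {S : Type} (P : S → Type) {X Y : Type} (f : X → Y) :
    Cont.Ext P X → Cont.Ext P Y :=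
  fun x => ⟨x.1, f ∘ x.2⟩

/-- A container morphism `t ◁ q`. -/
structure CMor {S : Type} (P : S → Type) {S' : Type} (P' : S' → Type) where
  t : S → S'
  q : ∀ s : S, P' (t s) → P s

/-- Interpretation of a container morphism. -/
def CMor.interp {S : Type} {P : S → Type} {S' : Type} {P' : S' → Type}
    (h : CMor P P') (X : Type) : Cont.Ext P X → Cont.Ext P' X :=
  fun x => ⟨h.t x.1, x.2 ∘ h.q x.1⟩

/-- Quote of a natural transformation: `⌜τ⌝ = (λ s, fst (τ (s, id))) ◁ (λ s, snd (τ (s, id)))`. -/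
def quote {S : Type} {P : S → Type} {S' : Type} {P' : S' → Type}
    (τ : ∀ X : Type, Cont.Ext P X → Cont.Ext P' X) : CMor P P' where
  t := fun s => (τ (P s) ⟨s, fun p => p⟩).1
  q := fun s => (τ (P s) ⟨s, fun p => p⟩).2

/-- Every natural transformation between container interpretations equals the
interpretation of its quote: `⟦⌜τ⌝⟧ = τ`. Hence the interpretation functor is full. -/
theorem interp_quote_eq {S : Type} (P : S → Type) {S' : Type} (P' : S' → Type)
    (τ : ∀ X : Type, Cont.Ext P X → Cont.Ext P' X)
    (nat : ∀ (X Y : Type) (f : X → Y) (x : Cont.Ext P X),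
      τ Y (Cont.map P f x) = Cont.map P' f (τ X x)) :
    ∀ X : Type, (quote τ).interp X = τ X := by
  intro X
  funext x
  obtain ⟨s, g⟩ := x
  have h := nat (P s) X g ⟨s, fun p => p⟩
  simp only [Cont.map] at h
  have h2 : (⟨s, g ∘ fun p => p⟩ : Cont.Ext P X) = ⟨s, g⟩ := rfl
  rw [h2] at h
  rw [h]
  rfl
end

section
/- Given a directed container (S ◁ P, ↓, o, ⊕), the functor D X = Σ s : S, (P s → X) with counit ε (s, v) = v (o {s}) and comultiplication δ (s, v) = (s, λ p, (s ↓ p, λ p', v (p ⊕ p'))) forms a comonad, i.e., ε and δ satisfy the left counit, right counit, and coassociativity laws. -/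
/-- A directed container `(S ◁ P, ↓, o, ⊕)`. The laws involving positions whose
types only agree propositionally (laws 4 and 5) are stated with `HEq`. -/
structure DCont where
  S : Type
  P : S → Type
  dn : ∀ s : S, P s → S
  root : ∀ s : S, P s
  add : ∀ (s : S) (p : P s), P (dn s p) → P s
  law1 : ∀ s : S, dn s (root s) = s
  law2 : ∀ (s : S) (p : P s) (p' : P (dn s p)), dn s (add s p p') = dn (dn s p) p'
  law3 : ∀ (s : S) (p : P s), add s p (root (dn s p)) = p
  law4 : ∀ (s : S) (p : P s) (phat : P (dn s (root s))),
    HEq p phat → add s (root s) phat = p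
  law5 : ∀ (s : S) (p : P s) (p' : P (dn s p))
    (q : P (dn s (add s p p'))) (q' : P (dn (dn s p) p')),
    HEq q q' → add s (add s p p') q = add s p (add (dn s p) p' q')

/-- The carrier of the interpretation: `D X = Σ s : S, P s → X`. -/
def DCont.W (E : DCont) (X : Type) : Type := Σ s : E.S, E.P s → X

/-- Functorial action of the carrier. -/
def DCont.wmap (E : DCont) {X Y : Type} (f : X → Y) : E.W X → E.W Y :=
  fun x => ⟨x.1, f ∘ x.2⟩

/-- Counit: `ε (s, v) = v o`. -/
def DCont.eps (E : DCont) {X : Type} : E.W X → X :=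
  fun x => x.2 (E.root x.1)

/-- Comultiplication: `δ (s, v) = (s, λ p, (s ↓ p, λ p', v (p ⊕ p')))`. -/
def DCont.del (E : DCont) {X : Type} : E.W X → E.W (E.W X) :=
  fun x => ⟨x.1, fun p => ⟨E.dn x.1 p, fun p' => x.2 (E.add x.1 p p')⟩⟩

namespace DCont

variable {E : DCont} {X : Type}

theorem W.ext {x y : E.W X} (hs : x.1 = y.1)
    (hv : ∀ p q, HEq p q → x.2 p = y.2 q) : x = y := by
  obtain ⟨s, v⟩ := x
  obtain ⟨t, w⟩ := y
  cases hs
  exact Sigma.ext rfl (heq_of_eq (funext fun p => hv p p HEq.rfl))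

theorem wmap_eps_del (x : E.W X) : E.wmap E.eps (E.del x) = x :=
  W.ext rfl fun p _ hp => by
    cases hp
    exact congrArg x.2 (E.law3 x.1 p)

theorem eps_del (x : E.W X) : E.eps (E.del x) = x :=
  W.ext (E.law1 x.1) fun p q hpq => congrArg x.2 (E.law4 x.1 q p hpq.symm)

theorem wmap_del_del (x : E.W X) : E.wmap E.del (E.del x) = E.del (E.del x) :=
  W.ext rfl fun p _ hp => by
    cases hp
    refine W.ext rfl fun p' _ hp' => ?_
    cases hp'
    exact W.ext (E.law2 x.1 p p').symm fun q' q hq =>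
      congrArg x.2 (E.law5 x.1 p p' q q' hq.symm).symm

end DCont

/-- The interpretation of a directed container is a comonad: `ε` and `δ`
satisfy the right counit, left counit, and coassociativity laws. -/
theorem directed_container_interpretation_is_comonad (E : DCont) (X : Type) :
    (∀ x : E.W X, E.wmap E.eps (E.del x) = x) ∧
    (∀ x : E.W X, E.eps (E.del x) = x) ∧
    (∀ x : E.W X, E.wmap E.del (E.del x) = E.del (E.del x)) :=
  ⟨DCont.wmap_eps_del, DCont.eps_del, DCont.wmap_del_del⟩
end

section
/- If (t ◁ q) is a directed container morphism between directed containers E and E', then its interpretation ⟦t ◁ q⟧ (s, v) = (t s, v ∘ q) is a comonad morphism between the interpreting comonads, i.e., it commutes with the counits and comultiplications. -/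
/-- A directed container morphism `t ◁ q : E → E'`, with the third law stated
with `HEq` since the position types agree only propositionally (by law 1). -/
structure DMor (E E' : DCont) where
  t : E.S → E'.S
  q : ∀ s : E.S, E'.P (t s) → E.P s
  law1 : ∀ (s : E.S) (p : E'.P (t s)), t (E.dn s (q s p)) = E'.dn (t s) p
  law2 : ∀ s : E.S, E.root s = q s (E'.root (t s))
  law3 : ∀ (s : E.S) (p : E'.P (t s)) (p' : E'.P (E'.dn (t s) p))
    (phat : E'.P (t (E.dn s (q s p)))),
    HEq phat p' →
      E.add s (q s p) (q (E.dn s (q s p)) phat) = q s (E'.add (t s) p p')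

/-- Interpretation of a directed container morphism: `⟦t ◁ q⟧ (s, v) = (t s, v ∘ q)`. -/
def DMor.interp {E E' : DCont} (h : DMor E E') (X : Type) : E.W X → E'.W X :=
  fun x => ⟨h.t x.1, x.2 ∘ h.q x.1⟩

theorem heq_fun_of_eq {A A' X : Type} (hA : A = A') {f : A → X} {g : A' → X}
    (hfg : ∀ (a : A) (a' : A'), HEq a a' → f a = g a') : HEq f g := by
  subst hA
  exact heq_of_eq (funext fun a => hfg a a HEq.rfl)

/-- The interpretation of a directed container morphism is a comonad morphism:
it commutes with the counits and the comultiplications. -/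
theorem dmor_interp_is_comonad_morphism {E E' : DCont} (h : DMor E E') (X : Type) :
    (∀ x : E.W X, E'.eps (h.interp X x) = E.eps x) ∧
    (∀ x : E.W X,
      E'.wmap (h.interp X) (h.interp (E.W X) (E.del x)) = E'.del (h.interp X x)) := by
  constructor
  · intro x
    simp [DCont.eps, DMor.interp, ← h.law2]
  · intro x
    obtain ⟨s, v⟩ := x
    simp only [DCont.del, DMor.interp, DCont.wmap]
    refine congrArg _ (funext fun p => ?_)
    simp only [Function.comp]
    refine Sigma.ext (h.law1 s p) ?_
    simp only [DMor.interp, Function.comp]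
    refine heq_fun_of_eq (congrArg E'.P (h.law1 s p)) fun a a' ha => ?_
    exact congrArg v (h.law3 s p a' a ha)
end

section
/- If τ is a comonad morphism between the interpretations of two directed containers E = (C, ↓, o, ⊕) and E' = (C', ↓', o', ⊕'), then the quoted container morphism ⌜τ⌝ satisfies the three directed container morphism laws. Hence the interpretation of directed containers into comonads is fully faithful. -/
/-- Shape map of the quote `⌜τ⌝`. -/
def qt {E E' : DCont} (τ : ∀ X : Type, E.W X → E'.W X) : E.S → E'.S :=
  fun s => (τ (E.P s) ⟨s, fun p => p⟩).1

/-- Position map of the quote `⌜τ⌝`. -/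
def qq {E E' : DCont} (τ : ∀ X : Type, E.W X → E'.W X) :
    ∀ s : E.S, E'.P (qt τ s) → E.P s :=
  fun s => (τ (E.P s) ⟨s, fun p => p⟩).2

/-! Naturality determines `τ` by its value at the generic element `⟨s, id⟩` (Yoneda), so `τ`
is the interpretation of `⌜τ⌝`. The comultiplication law at the generic element then gives the
shape law and the addition law of `⌜τ⌝` at once, and the counit law there is its root law. -/

section

variable {E E' : DCont} {τ : ∀ X : Type, E.W X → E'.W X}

theorem apply_mk_eq_of_natural
    (hnat : ∀ (X Y : Type) (f : X → Y) (x : E.W X), τ Y (E.wmap f x) = E'.wmap f (τ X x))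
    (X : Type) (s : E.S) (v : E.P s → X) :
    τ X ⟨s, v⟩ = ⟨qt τ s, v ∘ qq τ s⟩ :=
  hnat (E.P s) X v ⟨s, id⟩

theorem quote_dn_add_eq_of_comult
    (hnat : ∀ (X Y : Type) (f : X → Y) (x : E.W X), τ Y (E.wmap f x) = E'.wmap f (τ X x))
    (hcomult : ∀ (X : Type) (x : E.W X),
      E'.wmap (τ X) (τ (E.W X) (E.del x)) = E'.del (τ X x))
    (s : E.S) (p : E'.P (qt τ s)) :
    (⟨qt τ (E.dn s (qq τ s p)), E.add s (qq τ s p) ∘ qq τ (E.dn s (qq τ s p))⟩ : E'.W (E.P s))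
      = ⟨E'.dn (qt τ s) p, fun p' => qq τ s (E'.add (qt τ s) p p')⟩ := by
  have hcomult_generic : (⟨qt τ s, fun p => τ (E.P s) ⟨E.dn s (qq τ s p), E.add s (qq τ s p)⟩⟩ :
      E'.W (E'.W (E.P s))) = ⟨qt τ s, fun p => ⟨E'.dn (qt τ s) p, qq τ s ∘ E'.add (qt τ s) p⟩⟩ :=
    (congrArg (E'.wmap (τ (E.P s)))
      (apply_mk_eq_of_natural hnat _ s fun p => (⟨E.dn s p, E.add s p⟩ : E.W (E.P s)))).symm.trans
      (hcomult (E.P s) ⟨s, id⟩)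
  exact (apply_mk_eq_of_natural hnat _ _ _).symm.trans
    (congrFun (eq_of_heq (Sigma.mk.inj_iff.mp hcomult_generic).2) p)

end

/-- If `τ` is a comonad morphism between the interpretations of two directed
containers, then the quoted container morphism `⌜τ⌝` satisfies the three
directed container morphism laws (the third stated with `HEq`, as the position
types agree only propositionally).  Hence the interpretation of directed
containers into comonads is fully faithful. -/
theorem quote_of_comonad_morphism_is_dmor {E E' : DCont}
    (τ : ∀ X : Type, E.W X → E'.W X)
    (hnat : ∀ (X Y : Type) (f : X → Y) (x : E.W X),
      τ Y (E.wmap f x) = E'.wmap f (τ X x))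
    (hcounit : ∀ (X : Type) (x : E.W X), E'.eps (τ X x) = E.eps x)
    (hcomult : ∀ (X : Type) (x : E.W X),
      E'.wmap (τ X) (τ (E.W X) (E.del x)) = E'.del (τ X x)) :
    (∀ (s : E.S) (p : E'.P (qt τ s)),
      qt τ (E.dn s (qq τ s p)) = E'.dn (qt τ s) p) ∧
    (∀ s : E.S, E.root s = qq τ s (E'.root (qt τ s))) ∧
    (∀ (s : E.S) (p : E'.P (qt τ s)) (p' : E'.P (E'.dn (qt τ s) p))
      (phat : E'.P (qt τ (E.dn s (qq τ s p)))),
      HEq phat p' →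
        E.add s (qq τ s p) (qq τ (E.dn s (qq τ s p)) phat)
          = qq τ s (E'.add (qt τ s) p p')) := by
  have hdel s p := Sigma.mk.inj_iff.mp (quote_dn_add_eq_of_comult hnat hcomult s p)
  refine ⟨fun s p => (hdel s p).1, fun s => (hcounit _ ⟨s, id⟩).symm, ?_⟩
  intro s p p' phat hphat
  exact (congr_heq (hdel s p).2 hphat :)
end

section
/- If (D, ε, δ) is a comonad on Set and C = S ◁ P is a container with D = ⟦C⟧, then defining s ↓ p = snd (t^δ s) p, o {s} = q^ε {s} ⋆, and p ⊕ {s} p' = q^δ {s} (p, p'), where t^ε ◁ q^ε = ⌜e ∘ ε⌝ and t^δ ◁ q^δ = ⌜m ∘ δ⌝, yields a directed container: the five directed container laws hold. Moreover fst (t^δ s) = s for all s. -/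
/-!
By the Yoneda lemma, a natural transformation out of `⟦S ◁ P⟧` is determined by its value at
the generic element `⟨s, id⟩ : ⟦S ◁ P⟧ (P s)`. For `ε` this value is the root position `o {s}`;
for `δ` it is a shape-`s` structure (the right counit law fixes the shape) whose entry at `p` is
`⟨s ↓ p, p ⊕ -⟩`. Naturality then computes `ε` and `δ` everywhere from this data, and the comonad
laws evaluated at the generic element are exactly the directed container laws: the left counit law
gives the laws for `o` on the left, the right counit law the law `p ⊕ o = p`, and coassociativity
the two laws involving iterated `⊕`.
-/

/-- Interpretation of a container `S ◁ P`: `⟦S ◁ P⟧ X = Σ s : S, P s → X`. -/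
def W {S : Type} (P : S → Type) (X : Type) : Type := Σ s : S, P s → X

/-- Functorial action of `⟦S ◁ P⟧`. -/
def wmap {S : Type} (P : S → Type) {X Y : Type} (f : X → Y) : W P X → W P Y :=
  fun x => ⟨x.1, f ∘ x.2⟩

namespace W

variable {S : Type} {P : S → Type} {X : Type}

-- Stating lemmas with `mk` rather than `⟨s, f⟩` keeps them well typed up to reducible
-- unfolding (`W` is a plain `def`), which `rw` needs.
def mk (s : S) (f : P s → X) : W P X := ⟨s, f⟩

def generic (s : S) : W P (P s) := mk s fun p => p

theorem mk_eq_mk_iff {a b : S} {f : P a → X} {g : P b → X} :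
    mk a f = mk b g ↔ a = b ∧ HEq f g :=
  Sigma.mk.inj_iff

theorem eq_mk_cast (x : W P X) {s : S} (h : x.1 = s) :
    x = mk s fun p => x.2 (cast (congrArg P h).symm p) := by
  cases x; cases h; rfl

end W

theorem wmap_mk {S : Type} (P : S → Type) {X Y : Type} (f : X → Y) (s : S) (g : P s → X) :
    wmap P f (W.mk s g) = W.mk s (f ∘ g) :=
  rfl

structure IsDirectedContainer {S : Type} {P : S → Type} (dn : ∀ s : S, P s → S)
    (root : ∀ s : S, P s) (add : ∀ (s : S) (p : P s), P (dn s p) → P s) : Prop where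
  dn_root : ∀ s : S, dn s (root s) = s
  dn_add : ∀ (s : S) (p : P s) (p' : P (dn s p)), dn s (add s p p') = dn (dn s p) p'
  add_root : ∀ (s : S) (p : P s), add s p (root (dn s p)) = p
  root_add : ∀ (s : S) (p : P s) (phat : P (dn s (root s))),
    HEq p phat → add s (root s) phat = p
  add_add : ∀ (s : S) (p : P s) (p' : P (dn s p)) (q : P (dn s (add s p p')))
    (q' : P (dn (dn s p) p')), HEq q q' → add s (add s p p') q = add s p (add (dn s p) p' q')

section ComonadOnContainer

open W

variable {S : Type} {P : S → Type} (ε : ∀ X : Type, W P X → X)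
  (δ : ∀ X : Type, W P X → W P (W P X))
  (dn : ∀ s : S, P s → S) (add : ∀ (s : S) (p : P s), P (dn s p) → P s)

theorem counit_eq_of_natural
    (hεnat : ∀ (X Y : Type) (f : X → Y) (x : W P X), ε Y (wmap P f x) = f (ε X x))
    {X : Type} (s : S) (f : P s → X) : ε X (mk s f) = f (ε (P s) (generic s)) :=
  hεnat (P s) X f (generic s)

theorem comult_fst
    (hrightcounit : ∀ (X : Type) (x : W P X), wmap P (ε X) (δ X x) = x)
    {X : Type} (x : W P X) : (δ X x).1 = x.1 :=
  congrArg Sigma.fst (hrightcounit X x)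

theorem comult_eq_of_natural
    (hδnat : ∀ (X Y : Type) (f : X → Y) (x : W P X),
      δ Y (wmap P f x) = wmap P (wmap P f) (δ X x))
    (hδ : ∀ s, δ (P s) (generic s) = mk s fun p => mk (dn s p) (add s p))
    {X : Type} (s : S) (f : P s → X) :
    δ X (mk s f) = mk s fun p => mk (dn s p) fun p' => f (add s p p') := by
  have h := hδnat (P s) X f (generic s)
  rw [hδ] at h
  exact h

theorem counit_comult_generic
    (hεnat : ∀ (X Y : Type) (f : X → Y) (x : W P X), ε Y (wmap P f x) = f (ε X x))
    (hleftcounit : ∀ (X : Type) (x : W P X), ε (W P X) (δ X x) = x)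
    (hδ : ∀ s, δ (P s) (generic s) = mk s fun p => mk (dn s p) (add s p)) (s : S) :
    mk (dn s (ε _ (generic s))) (add s (ε _ (generic s))) = generic s := by
  have h := hleftcounit (P s) (generic s)
  rw [hδ, counit_eq_of_natural ε hεnat] at h
  exact h

theorem add_counit_generic
    (hεnat : ∀ (X Y : Type) (f : X → Y) (x : W P X), ε Y (wmap P f x) = f (ε X x))
    (hrightcounit : ∀ (X : Type) (x : W P X), wmap P (ε X) (δ X x) = x)
    (hδ : ∀ s, δ (P s) (generic s) = mk s fun p => mk (dn s p) (add s p)) (s : S) (p : P s) :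
    add s p (ε _ (generic (dn s p))) = p := by
  have h := hrightcounit (P s) (generic s)
  rw [hδ, wmap_mk, generic, mk_eq_mk_iff] at h
  rw [← counit_eq_of_natural ε hεnat (dn s p) (add s p)]
  exact congrFun (eq_of_heq h.2) p

theorem comult_comult_generic
    (hδnat : ∀ (X Y : Type) (f : X → Y) (x : W P X),
      δ Y (wmap P f x) = wmap P (wmap P f) (δ X x))
    (hcoassoc : ∀ (X : Type) (x : W P X), wmap P (δ X) (δ X x) = δ (W P X) (δ X x))
    (hδ : ∀ s, δ (P s) (generic s) = mk s fun p => mk (dn s p) (add s p)) (s : S) (p : P s)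
    (p' : P (dn s p)) :
    mk (dn (dn s p) p') (fun q' => add s p (add (dn s p) p' q')) =
      mk (dn s (add s p p')) (add s (add s p p')) := by
  have h := hcoassoc (P s) (generic s)
  rw [hδ, wmap_mk, comult_eq_of_natural δ dn add hδnat hδ, mk_eq_mk_iff] at h
  have h' := congrFun (eq_of_heq h.2) p
  rw [Function.comp_apply, comult_eq_of_natural δ dn add hδnat hδ, mk_eq_mk_iff] at h'
  exact congrFun (eq_of_heq h'.2) p'

theorem isDirectedContainer_of_comonad
    (hεnat : ∀ (X Y : Type) (f : X → Y) (x : W P X), ε Y (wmap P f x) = f (ε X x))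
    (hδnat : ∀ (X Y : Type) (f : X → Y) (x : W P X),
      δ Y (wmap P f x) = wmap P (wmap P f) (δ X x))
    (hrightcounit : ∀ (X : Type) (x : W P X), wmap P (ε X) (δ X x) = x)
    (hleftcounit : ∀ (X : Type) (x : W P X), ε (W P X) (δ X x) = x)
    (hcoassoc : ∀ (X : Type) (x : W P X), wmap P (δ X) (δ X x) = δ (W P X) (δ X x))
    (hδ : ∀ s, δ (P s) (generic s) = mk s fun p => mk (dn s p) (add s p)) :
    IsDirectedContainer dn (fun s => ε (P s) (generic s)) add where
  dn_root s := (mk_eq_mk_iff.1 (counit_comult_generic ε δ dn add hεnat hleftcounit hδ s)).1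
  dn_add s p p' :=
    (mk_eq_mk_iff.1 (comult_comult_generic δ dn add hδnat hcoassoc hδ s p p')).1.symm
  add_root := add_counit_generic ε δ dn add hεnat hrightcounit hδ
  root_add s _ _ hp := congr_heq
    (mk_eq_mk_iff.1 (counit_comult_generic ε δ dn add hεnat hleftcounit hδ s)).2 hp.symm
  add_add s p p' _ _ hq := (congr_heq
    (mk_eq_mk_iff.1 (comult_comult_generic δ dn add hδnat hcoassoc hδ s p p')).2 hq.symm).symm

end ComonadOnContainer

/-- If `(D, ε, δ)` is a comonad on Set whose underlying functor is the
interpretation of the container `S ◁ P`, then the shape of a data-structure is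
preserved by `δ` (`fst (t^δ s) = s`) and the operations
`s ↓ p = snd (t^δ s) p`, `o {s} = q^ε {s} ⋆`, `p ⊕ p' = q^δ {s} (p, p')`
(obtained by quoting `e ∘ ε` and `m ∘ δ`) satisfy the five directed container
laws (laws 4 and 5 stated with `HEq`, as the position types agree only
propositionally). -/
theorem comonad_on_container_is_directed_container {S : Type} (P : S → Type)
    (ε : ∀ X : Type, W P X → X) (δ : ∀ X : Type, W P X → W P (W P X))
    (hεnat : ∀ (X Y : Type) (f : X → Y) (x : W P X), ε Y (wmap P f x) = f (ε X x))
    (hδnat : ∀ (X Y : Type) (f : X → Y) (x : W P X),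
      δ Y (wmap P f x) = wmap P (wmap P f) (δ X x))
    (hrightcounit : ∀ (X : Type) (x : W P X), wmap P (ε X) (δ X x) = x)
    (hleftcounit : ∀ (X : Type) (x : W P X), ε (W P X) (δ X x) = x)
    (hcoassoc : ∀ (X : Type) (x : W P X), wmap P (δ X) (δ X x) = δ (W P X) (δ X x)) :
    ∃ hfst : ∀ s : S, (δ (P s) ⟨s, fun p => p⟩).1 = s,
      let dn : ∀ s : S, P s → S := fun s p =>
        ((δ (P s) ⟨s, fun p => p⟩).2 (cast (congrArg P (hfst s)).symm p)).1
      let root : ∀ s : S, P s := fun s => ε (P s) ⟨s, fun p => p⟩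
      let add : ∀ (s : S) (p : P s), P (dn s p) → P s := fun s p p' =>
        ((δ (P s) ⟨s, fun p => p⟩).2 (cast (congrArg P (hfst s)).symm p)).2 p'
      (∀ s : S, dn s (root s) = s) ∧
      (∀ (s : S) (p : P s) (p' : P (dn s p)), dn s (add s p p') = dn (dn s p) p') ∧
      (∀ (s : S) (p : P s), add s p (root (dn s p)) = p) ∧
      (∀ (s : S) (p : P s) (phat : P (dn s (root s))),
        HEq p phat → add s (root s) phat = p) ∧
      (∀ (s : S) (p : P s) (p' : P (dn s p))
        (q : P (dn s (add s p p'))) (q' : P (dn (dn s p) p')),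
        HEq q q' → add s (add s p p') q = add s p (add (dn s p) p' q')) := by
  have hfst : ∀ s : S, (δ (P s) ⟨s, fun p => p⟩).1 = s := fun s =>
    comult_fst ε δ hrightcounit (W.generic s)
  refine ⟨hfst, ?_⟩
  intro dn root add
  have hδ : ∀ s, δ (P s) (W.generic s) = W.mk s fun p => W.mk (dn s p) (add s p) :=
    fun s => W.eq_mk_cast _ (hfst s)
  have h := isDirectedContainer_of_comonad ε δ dn add hεnat hδnat hrightcounit hleftcounit
    hcoassoc hδ
  exact ⟨h.dn_root, h.dn_add, h.add_root, h.root_add, h.add_add⟩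
end

section
/- Every monoid (M, e, •) gives rise to a directed container with S = 1, P ⋆ = M, ⋆ ↓ p = ⋆, o = e, and p ⊕ p' = p • p'; conversely, a directed container structure on the container 1 ◁ (λ ⋆, M) is exactly a monoid structure on M. -/
/-- Every monoid gives rise to a directed container on the container
`1 ◁ (λ ⋆, M)` (with `⋆ ↓ p = ⋆`, `o = e`, `p ⊕ p' = p • p'`), and conversely
a directed container structure on this container is exactly a monoid structure
on `M`: the five directed container laws are equivalent to the monoid laws. -/
theorem monoid_iff_directed_container_on_unit :
    (∀ (M : Type) [Monoid M],
      (∀ s : Unit, (fun (_ : Unit) (_ : M) => ()) s (1 : M) = s) ∧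
      (∀ (s : Unit) (p p' : M),
        (fun (_ : Unit) (_ : M) => ()) s (p * p')
          = (fun (_ : Unit) (_ : M) => ()) ((fun (_ : Unit) (_ : M) => ()) s p) p') ∧
      (∀ p : M, p * 1 = p) ∧
      (∀ p : M, 1 * p = p) ∧
      (∀ p p' p'' : M, (p * p') * p'' = p * (p' * p''))) ∧
    (∀ (M : Type) (dn : Unit → M → Unit) (e : M) (mul : M → M → M),
      ((∀ s : Unit, dn s e = s) ∧
       (∀ (s : Unit) (p p' : M), dn s (mul p p') = dn (dn s p) p') ∧
       (∀ p : M, mul p e = p) ∧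
       (∀ p : M, mul e p = p) ∧
       (∀ p p' p'' : M, mul (mul p p') p'' = mul p (mul p' p'')))
      ↔ ((∀ p : M, mul e p = p) ∧
         (∀ p : M, mul p e = p) ∧
         (∀ p p' p'' : M, mul (mul p p') p'' = mul p (mul p' p'')))) := by
  constructor
  · intro M _
    refine ⟨fun s => rfl, fun s p p' => rfl, mul_one, one_mul, mul_assoc⟩
  · intro M dn e mul
    constructor
    · rintro ⟨_, _, h1, h2, h3⟩; exact ⟨h2, h1, h3⟩
    · rintro ⟨h2, h1, h3⟩
      exact ⟨fun s => rfl, fun s p p' => rfl, h1, h2, h3⟩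
end

section
/- The coproduct of two directed containers E₀ and E₁—with shapes S₀ + S₁, positions inherited from each summand, and operations defined componentwise (inl s ↓ p = inl (s ↓₀ p), o {inl s} = o₀ {s}, p ⊕ {inl s} p' = p ⊕₀ p', and symmetrically for inr)—is a directed container, and is a coproduct of E₀ and E₁ in the category of directed containers. -/
/-- Positions of the coproduct of directed containers. -/
def sP (E₀ E₁ : DCont) : E₀.S ⊕ E₁.S → Type
  | .inl a => E₀.P a
  | .inr b => E₁.P b

/-- Subshapes of the coproduct, defined componentwise. -/
def sdn (E₀ E₁ : DCont) : ∀ s : E₀.S ⊕ E₁.S, sP E₀ E₁ s → E₀.S ⊕ E₁.S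
  | .inl a, p => .inl (E₀.dn a p)
  | .inr b, p => .inr (E₁.dn b p)

/-- Roots of the coproduct, defined componentwise. -/
def sroot (E₀ E₁ : DCont) : ∀ s : E₀.S ⊕ E₁.S, sP E₀ E₁ s
  | .inl a => E₀.root a
  | .inr b => E₁.root b

/-- Translation of the coproduct, defined componentwise. -/
def sadd (E₀ E₁ : DCont) :
    ∀ (s : E₀.S ⊕ E₁.S) (p : sP E₀ E₁ s), sP E₀ E₁ (sdn E₀ E₁ s p) → sP E₀ E₁ s
  | .inl a, p, p' => E₀.add a p p'
  | .inr b, p, p' => E₁.add b p p'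

lemma DMor.ext' {E E' : DCont} {f g : DMor E E'} (h : f.t = g.t)
    (h2 : HEq f.q g.q) : f = g := by
  cases f; cases g
  simp only at h h2
  subst h
  cases h2
  rfl

/-- The coproduct directed container. -/
def cop (E₀ E₁ : DCont) : DCont where
  S := E₀.S ⊕ E₁.S
  P := sP E₀ E₁
  dn := sdn E₀ E₁
  root := sroot E₀ E₁
  add := sadd E₀ E₁
  law1 := by
    rintro (a | b)
    · exact congrArg Sum.inl (E₀.law1 a)
    · exact congrArg Sum.inr (E₁.law1 b)
  law2 := by
    rintro (a | b) p p'
    · exact congrArg Sum.inl (E₀.law2 a p p')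
    · exact congrArg Sum.inr (E₁.law2 b p p')
  law3 := by
    rintro (a | b) p
    · exact E₀.law3 a p
    · exact E₁.law3 b p
  law4 := by
    rintro (a | b) p phat h
    · exact E₀.law4 a p phat h
    · exact E₁.law4 b p phat h
  law5 := by
    rintro (a | b) p p' q q' h
    · exact E₀.law5 a p p' q q' h
    · exact E₁.law5 b p p' q q' h

/-- First injection. -/
def inj₀ (E₀ E₁ : DCont) : DMor E₀ (cop E₀ E₁) where
  t := Sum.inl
  q := fun _ p => p
  law1 := fun _ _ => rfl
  law2 := fun _ => rfl
  law3 := fun s p p' phat h => by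
    have := eq_of_heq h
    subst this
    rfl

/-- Second injection. -/
def inj₁ (E₀ E₁ : DCont) : DMor E₁ (cop E₀ E₁) where
  t := Sum.inr
  q := fun _ p => p
  law1 := fun _ _ => rfl
  law2 := fun _ => rfl
  law3 := fun s p p' phat h => by
    have := eq_of_heq h
    subst this
    rfl

/-- The mediating morphism out of the coproduct. -/
def med (E₀ E₁ E' : DCont) (f₀ : DMor E₀ E') (f₁ : DMor E₁ E') :
    DMor (cop E₀ E₁) E' where
  t := Sum.elim f₀.t f₁.t
  q := fun s => match s with
    | .inl a => f₀.q a
    | .inr b => f₁.q b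
  law1 := by
    rintro (a | b) p
    · exact f₀.law1 a p
    · exact f₁.law1 b p
  law2 := by
    rintro (a | b)
    · exact f₀.law2 a
    · exact f₁.law2 b
  law3 := by
    rintro (a | b) p p' phat h
    · exact f₀.law3 a p p' phat h
    · exact f₁.law3 b p p' phat h

/-- The coproduct of two directed containers—shapes `S₀ + S₁`, positions
inherited from each summand, operations componentwise—is a directed container,
and it is a coproduct of `E₀` and `E₁` in the category of directed containers:
the injections are directed container morphisms and for any cocone `(f₀, f₁)`
there is a unique mediating directed container morphism. -/
theorem coproduct_of_directed_containers (E₀ E₁ : DCont) :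
    ∃ E : DCont,
      E.S = (E₀.S ⊕ E₁.S) ∧
      HEq E.P (sP E₀ E₁) ∧
      HEq E.dn (sdn E₀ E₁) ∧
      HEq E.root (sroot E₀ E₁) ∧
      HEq E.add (sadd E₀ E₁) ∧
      ∃ (i₀ : DMor E₀ E) (i₁ : DMor E₁ E),
        HEq i₀.t (@Sum.inl E₀.S E₁.S) ∧
        HEq i₁.t (@Sum.inr E₀.S E₁.S) ∧
        HEq i₀.q (fun (a : E₀.S) (p : sP E₀ E₁ (Sum.inl a)) => (p : E₀.P a)) ∧
        HEq i₁.q (fun (b : E₁.S) (p : sP E₀ E₁ (Sum.inr b)) => (p : E₁.P b)) ∧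
        ∀ (E' : DCont) (f₀ : DMor E₀ E') (f₁ : DMor E₁ E'),
          ∃! f : DMor E E',
            (∀ a : E₀.S, f.t (i₀.t a) = f₀.t a) ∧
            (∀ (a : E₀.S) (p : E'.P (f.t (i₀.t a))) (phat : E'.P (f₀.t a)),
              HEq p phat → i₀.q a (f.q (i₀.t a) p) = f₀.q a phat) ∧
            (∀ b : E₁.S, f.t (i₁.t b) = f₁.t b) ∧
            (∀ (b : E₁.S) (p : E'.P (f.t (i₁.t b))) (phat : E'.P (f₁.t b)),
              HEq p phat → i₁.q b (f.q (i₁.t b) p) = f₁.q b phat) := by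
  refine ⟨cop E₀ E₁, rfl, HEq.rfl, HEq.rfl, HEq.rfl, HEq.rfl,
    inj₀ E₀ E₁, inj₁ E₀ E₁, HEq.rfl, HEq.rfl, HEq.rfl, HEq.rfl, ?_⟩
  intro E' f₀ f₁
  refine ⟨med E₀ E₁ E' f₀ f₁, ⟨fun a => rfl, ?_, fun b => rfl, ?_⟩, ?_⟩
  · intro a p phat h
    cases eq_of_heq h
    rfl
  · intro b p phat h
    cases eq_of_heq h
    rfl
  · rintro g ⟨h₀t, h₀q, h₁t, h₁q⟩
    have ht : g.t = (med E₀ E₁ E' f₀ f₁).t := by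
      funext s
      cases s with
      | inl a => exact h₀t a
      | inr b => exact h₁t b
    refine DMor.ext' ht ?_
    cases g with
    | mk gt gq gl1 gl2 gl3 =>
      simp only at ht h₀q h₁q ⊢
      subst ht
      refine heq_of_eq (funext fun s => funext fun p => ?_)
      match s, p with
      | .inl a, p => exact h₀q a p p HEq.rfl
      | .inr b, p => exact h₁q b p p HEq.rfl
end

section
/- Every strict directed container (S ◁ P⁺, ↓⁺, ⊕⁺) induces a directed container with positions P s = Option (P⁺ s), subshape s ↓ none = s and s ↓ some p = s ↓⁺ p, root o = none, and none ⊕ p = p, some p ⊕ none = some p, some p ⊕ some p' = some (p ⊕⁺ p'): the five directed container laws follow from the two strict directed container laws. -/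
/-- A strict directed container `(S ◁ P⁺, ↓⁺, ⊕⁺)` (the second law stated with
`HEq`, since the position types agree only propositionally by the first law). -/
structure SDCont where
  S : Type
  P : S → Type
  dn : ∀ s : S, P s → S
  add : ∀ (s : S) (p : P s), P (dn s p) → P s
  law1 : ∀ (s : S) (p : P s) (p' : P (dn s p)), dn s (add s p p') = dn (dn s p) p'
  law2 : ∀ (s : S) (p : P s) (p' : P (dn s p))
    (q : P (dn s (add s p p'))) (q' : P (dn (dn s p) p')),
    HEq q q' → add s (add s p p') q = add s p (add (dn s p) p' q')

/-- Positions of the induced directed container: `P s = Option (P⁺ s)`. -/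
def SDCont.oP (D : SDCont) (s : D.S) : Type := Option (D.P s)

/-- Induced subshape: `s ↓ none = s`, `s ↓ some p = s ↓⁺ p`. -/
def SDCont.odn (D : SDCont) (s : D.S) : D.oP s → D.S
  | none => s
  | some p => D.dn s p

/-- Induced root: `o = none`. -/
def SDCont.oroot (D : SDCont) (s : D.S) : D.oP s := none

/-- Induced translation: `none ⊕ p = p`, `some p ⊕ none = some p`,
`some p ⊕ some p' = some (p ⊕⁺ p')`. -/
def SDCont.oadd (D : SDCont) (s : D.S) :
    ∀ p : D.oP s, D.oP (D.odn s p) → D.oP s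
  | none, p' => p'
  | some p, none => some p
  | some p, some p' => some (D.add s p p')

theorem Option.heq_cases {ι : Type*} {P : ι → Type*} {x y : ι} (h : x = y)
    {q : Option (P x)} {q' : Option (P y)} (hq : HEq q q') :
    (q = none ∧ q' = none) ∨ ∃ a b, q = some a ∧ q' = some b ∧ HEq a b := by
  subst h
  cases eq_of_heq hq
  cases q with
  | none => exact .inl ⟨rfl, rfl⟩
  | some a => exact .inr ⟨a, a, rfl, rfl, .rfl⟩

namespace SDCont

variable (D : SDCont)

theorem odn_oroot (s : D.S) : D.odn s (D.oroot s) = s := rfl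

theorem odn_oadd (s : D.S) (p : D.oP s) (p' : D.oP (D.odn s p)) :
    D.odn s (D.oadd s p p') = D.odn (D.odn s p) p' := by
  cases p with
  | none => rfl
  | some p =>
    cases p' with
    | none => rfl
    | some p' => exact D.law1 s p p'

theorem oadd_oroot (s : D.S) (p : D.oP s) : D.oadd s p (D.oroot (D.odn s p)) = p := by
  cases p <;> rfl

theorem oroot_oadd (s : D.S) (p : D.oP s) (phat : D.oP (D.odn s (D.oroot s)))
    (h : HEq p phat) : D.oadd s (D.oroot s) phat = p :=
  (eq_of_heq h).symm

theorem oadd_oadd (s : D.S) (p : D.oP s) (p' : D.oP (D.odn s p))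
    (q : D.oP (D.odn s (D.oadd s p p'))) (q' : D.oP (D.odn (D.odn s p) p'))
    (h : HEq q q') : D.oadd s (D.oadd s p p') q = D.oadd s p (D.oadd (D.odn s p) p' q') := by
  cases p with
  | none => cases eq_of_heq h; rfl
  | some p =>
    cases p' with
    | none => cases eq_of_heq h; rfl
    | some p' =>
      -- `q` and `q'` live over the subshapes identified by `law1`, so they agree in constructor.
      rcases Option.heq_cases (D.law1 s p p') h with ⟨rfl, rfl⟩ | ⟨a, b, rfl, rfl, hab⟩
      · rfl
      · exact congrArg some (D.law2 s p p' a b hab)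

end SDCont

/-- Every strict directed container induces a directed container: the five
directed container laws hold for the induced `Option`-based structure (laws 4
and 5 stated with `HEq`, since the position types agree only propositionally). -/
theorem strict_directed_container_induces_directed_container (D : SDCont) :
    (∀ s : D.S, D.odn s (D.oroot s) = s) ∧
    (∀ (s : D.S) (p : D.oP s) (p' : D.oP (D.odn s p)),
      D.odn s (D.oadd s p p') = D.odn (D.odn s p) p') ∧
    (∀ (s : D.S) (p : D.oP s), D.oadd s p (D.oroot (D.odn s p)) = p) ∧
    (∀ (s : D.S) (p : D.oP s) (phat : D.oP (D.odn s (D.oroot s))),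
      HEq p phat → D.oadd s (D.oroot s) phat = p) ∧
    (∀ (s : D.S) (p : D.oP s) (p' : D.oP (D.odn s p))
      (q : D.oP (D.odn s (D.oadd s p p'))) (q' : D.oP (D.odn (D.odn s p) p')),
      HEq q q' → D.oadd s (D.oadd s p p') q = D.oadd s p (D.oadd (D.odn s p) p' q')) :=
  ⟨D.odn_oroot, D.odn_oadd, D.oadd_oroot, D.oroot_oadd, D.oadd_oadd⟩
end

section
/- For any directed container (S ◁ P, ↓, o, ⊕), the functor T X = Π s : S, (P s × X) with unit η x s = (o {s}, x) and multiplication μ f s = let (p, g) := f s; (p', x) := g (s ↓ p) in (p ⊕ p', x) is a monad on Set (a dependently typed update monad): the left unit, right unit, and associativity laws hold. -/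
/-- The cointerpretation carrier: `T X = Π s : S, P s × X`. -/
def DCont.T (E : DCont) (X : Type) : Type := ∀ s : E.S, E.P s × X

/-- Functorial action of `T`. -/
def DCont.tmap (E : DCont) {X Y : Type} (f : X → Y) : E.T X → E.T Y :=
  fun t s => ((t s).1, f (t s).2)

/-- Unit: `η x s = (o {s}, x)`. -/
def DCont.unit (E : DCont) {X : Type} (x : X) : E.T X :=
  fun s => (E.root s, x)

/-- Multiplication:
`μ f s = let (p, g) := f s; (p', x) := g (s ↓ p) in (p ⊕ p', x)`. -/
def DCont.mult (E : DCont) {X : Type} (f : E.T (E.T X)) : E.T X :=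
  fun s =>
    (E.add s (f s).1 ((f s).2 (E.dn s (f s).1)).1,
     ((f s).2 (E.dn s (f s).1)).2)

/-- For any directed container, `T X = Π s, P s × X` with the given unit and
multiplication is a monad on Set (a dependently typed update monad): the left
unit, right unit, and associativity laws hold. -/
theorem directed_container_update_monad (E : DCont) (X : Type) :
    (∀ t : E.T X, E.mult (E.unit t) = t) ∧
    (∀ t : E.T X, E.mult (E.tmap E.unit t) = t) ∧
    (∀ t : E.T (E.T (E.T X)), E.mult (E.mult t) = E.mult (E.tmap E.mult t)) := by
  refine ⟨?_, ?_, ?_⟩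
  · intro t
    funext s
    simp only [DCont.mult, DCont.unit]
    have h := E.law1 s
    refine Prod.ext ?_ ?_
    · exact E.law4 s (t s).1 ((t (E.dn s (E.root s))).1) (by rw [h])
    · show (t (E.dn s (E.root s))).2 = (t s).2
      rw [h]
  · intro t
    funext s
    simp only [DCont.mult, DCont.tmap, DCont.unit]
    exact Prod.ext (E.law3 s (t s).1) rfl
  · intro t
    funext s
    simp only [DCont.mult, DCont.tmap]
    set p := (t s).1 with hp
    set u := (t s).2 with hu
    set q := (u (E.dn s p)).1 with hq
    set g := (u (E.dn s p)).2 with hg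
    have h : E.dn s (E.add s p q) = E.dn (E.dn s p) q := E.law2 s p q
    have h1 : HEq (g (E.dn s (E.add s p q))).1 (g (E.dn (E.dn s p) q)).1 := by
      rw [h]
    have h2 : (g (E.dn s (E.add s p q))).2 = (g (E.dn (E.dn s p) q)).2 := by
      rw [h]
    exact Prod.ext (E.law5 s p q _ _ h1) h2
end

section
/- Given coideal comonad data (D⁺, δ⁺) with δ⁺ : D⁺ → D⁺ ∘ D satisfying D⁺ε ∘ δ⁺ = id and D⁺δ ∘ δ⁺ = δ⁺D ∘ δ⁺, the data D X = X × D⁺ X, ε = fst, δ = ⟨id, δ⁺ ∘ snd⟩ form a comonad on Set. -/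
/-- The comonad carrier induced by coideal comonad data: `D X = X × D⁺ X`. -/
def Dc (F : Type → Type) (X : Type) : Type := X × F X

/-- Functorial action of `D`, given that of `D⁺`. -/
def dmap (F : Type → Type) (Fmap : ∀ {X Y : Type}, (X → Y) → F X → F Y)
    {X Y : Type} (f : X → Y) : Dc F X → Dc F Y :=
  fun x => (f x.1, Fmap f x.2)

/-- Counit: `ε = fst`. -/
def deps (F : Type → Type) {X : Type} : Dc F X → X := Prod.fst

/-- Comultiplication: `δ = ⟨id, δ⁺ ∘ snd⟩`. -/
def ddel (F : Type → Type) (delp : ∀ X : Type, F X → F (Dc F X)) {X : Type} :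
    Dc F X → Dc F (Dc F X) :=
  fun x => (x, delp X x.2)

section

variable {F : Type → Type} (Fmap : ∀ {X Y : Type}, (X → Y) → F X → F Y)
  (delp : ∀ X : Type, F X → F (Dc F X)) {X : Type}

theorem dmap_deps_ddel (coideal : ∀ d : F X, Fmap (deps F) (delp X d) = d) (x : Dc F X) :
    dmap F Fmap (deps F) (ddel F delp x) = x :=
  Prod.ext rfl (coideal x.2)

theorem dmap_ddel_ddel
    (coassoc : ∀ d : F X, Fmap (ddel F delp) (delp X d) = delp (Dc F X) (delp X d))
    (x : Dc F X) :
    dmap F Fmap (ddel F delp) (ddel F delp x) = ddel F delp (ddel F delp x) :=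
  Prod.ext rfl (coassoc x.2)

end

theorem coideal_data_gives_comonad_general (F : Type → Type)
    (Fmap : ∀ {X Y : Type}, (X → Y) → F X → F Y)
    (delp : ∀ X : Type, F X → F (Dc F X))
    (coideal1 : ∀ (X : Type) (d : F X), Fmap (deps F (X := X)) (delp X d) = d)
    (coideal2 : ∀ (X : Type) (d : F X),
      Fmap (ddel F delp (X := X)) (delp X d) = delp (Dc F X) (delp X d)) :
    (∀ (X : Type) (x : Dc F X), dmap F Fmap (deps F (X := X)) (ddel F delp x) = x) ∧
    (∀ (X : Type) (x : Dc F X), deps F (ddel F delp x) = x) ∧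
    (∀ (X : Type) (x : Dc F X),
      dmap F Fmap (ddel F delp (X := X)) (ddel F delp x) = ddel F delp (ddel F delp x)) :=
  ⟨fun X => dmap_deps_ddel Fmap delp (coideal1 X), fun _ _ => rfl,
    fun X => dmap_ddel_ddel Fmap delp (coideal2 X)⟩

/-- Given coideal comonad data `(D⁺, δ⁺)` — a functor `D⁺` with
`δ⁺ : D⁺ → D⁺ ∘ D` satisfying `D⁺ε ∘ δ⁺ = id` and `D⁺δ ∘ δ⁺ = δ⁺D ∘ δ⁺` —
the data `D X = X × D⁺ X`, `ε = fst`, `δ = ⟨id, δ⁺ ∘ snd⟩` form a comonad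
on Set. -/
theorem coideal_data_gives_comonad (F : Type → Type)
    (Fmap : ∀ {X Y : Type}, (X → Y) → F X → F Y)
    (Fmap_id : ∀ X : Type, Fmap (id : X → X) = id)
    (Fmap_comp : ∀ (X Y Z : Type) (f : X → Y) (g : Y → Z),
      Fmap (g ∘ f) = Fmap g ∘ Fmap f)
    (delp : ∀ X : Type, F X → F (Dc F X))
    (coideal1 : ∀ (X : Type) (d : F X), Fmap (deps F (X := X)) (delp X d) = d)
    (coideal2 : ∀ (X : Type) (d : F X),
      Fmap (ddel F delp (X := X)) (delp X d) = delp (Dc F X) (delp X d)) :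
    (∀ (X : Type) (x : Dc F X), dmap F Fmap (deps F (X := X)) (ddel F delp x) = x) ∧
    (∀ (X : Type) (x : Dc F X), deps F (ddel F delp x) = x) ∧
    (∀ (X : Type) (x : Dc F X),
      dmap F Fmap (ddel F delp (X := X)) (ddel F delp x) = ddel F delp (ddel F delp x)) :=
  coideal_data_gives_comonad_general F Fmap delp coideal1 coideal2
end
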